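/- Let M = (L, μ0, Σ, δ) be an MDP. If there exists a (randomized) strategy α such that M with strategy α is strongly synchronizing, then there exists a pure strategy β such that M with strategy β is strongly synchronizing. -/

import Mathlib

/-!
Strong synchronization of `α` makes the mass `X_n` concentrate on a single state `ℓ_n`. If
`θ < 1` bounds every transition probability below `1`, two consecutive masses above
`(1 + θ)/2` force `δ(ℓ_n, a, ℓ_{n+1}) = 1` for some action `a`; so the states `ℓ_n` eventually
follow Dirac transitions and, by pigeonhole, return infinitely often and in phase to a Dirac
cycle `s` of some period `P`. Hence every `α`-positive history has an `α`-positive extension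
ending on the cycle.

The pure strategy plays along the cycle on it and, off it, the first action of a shortest such
extension; it depends only on the current state and the time modulo `P`. It never leaves the
phases reachable under `α`, from each of which it enters the cycle within `K` steps with
probability at least `η ^ K` (`η` the least positive transition probability). The mass off the
cycle therefore decays geometrically, and the mass of `s (n mod P)` tends to `1`.
-/

open Filter

namespace SyncMDP

/-- A history: an initial state followed by a list of (action, state) steps. -/
structure Hist (L A : Type) where
  start : L
  steps : List (A × L)
deriving DecidableEq

variable {L A : Type}

/-- The last state of a history. -/
def Hist.last (h : Hist L A) : L := h.steps.foldl (fun _ p => p.2) h.start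

/-- The length of a history. -/
def Hist.len (h : Hist L A) : ℕ := h.steps.length

/-- Extending a history by one action and one state. -/
def Hist.extend (h : Hist L A) (a : A) (l : L) : Hist L A := ⟨h.start, h.steps ++ [(a, l)]⟩

/-- A probability distribution on a finite type. -/
def IsDist {S : Type} [Fintype S] (d : S → ℝ) : Prop :=
  (∀ s, 0 ≤ d s) ∧ ∑ s, d s = 1

/-- A probabilistic transition function. -/
def IsTrans [Fintype L] (δ : L → A → L → ℝ) : Prop := ∀ l a, IsDist (δ l a)

/-- A (randomized) strategy assigns a distribution over actions to every history. -/
def IsStrategy [Fintype A] (α : Hist L A → A → ℝ) : Prop :=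
  ∀ h : Hist L A, (∀ a, 0 ≤ α h a) ∧ ∑ a, α h a = 1

/-- A pure strategy plays one action with probability one after every history. -/
def PureStrat (α : Hist L A → A → ℝ) : Prop := ∀ h, ∃ a, α h a = 1

/-- A blind strategy only depends on the length of the history. -/
def BlindStrat (α : Hist L A → A → ℝ) : Prop :=
  ∀ h₁ h₂ : Hist L A, h₁.len = h₂.len → α h₁ = α h₂

/-- A memoryless strategy only depends on the last state of the history. -/
def Memoryless (α : Hist L A → A → ℝ) : Prop :=
  ∀ h₁ h₂ : Hist L A, h₁.last = h₂.last → α h₁ = α h₂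

/-- Auxiliary product for the probability of a history: the first argument is the current
state, the second the history (prefix) read so far, the third the remaining steps. -/
def prAux (δ : L → A → L → ℝ) (α : Hist L A → A → ℝ) : L → Hist L A → List (A × L) → ℝ
  | _, _, [] => 1
  | cur, pre, (a, l) :: rest => α pre a * δ cur a l * prAux δ α l (pre.extend a l) rest

/-- The probability `Pr^α(h)` of a history `h`. -/
def pr (μ0 : L → ℝ) (δ : L → A → L → ℝ) (α : Hist L A → A → ℝ) (h : Hist L A) : ℝ :=
  μ0 h.start * prAux δ α h.start ⟨h.start, []⟩ h.steps

variable (L A) in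
/-- The finite set of all histories of length `n`. -/
def hists [Fintype L] [DecidableEq L] [Fintype A] [DecidableEq A] : ℕ → Finset (Hist L A)
  | 0 => Finset.univ.image fun l : L => ⟨l, []⟩
  | n + 1 => (hists n).biUnion fun h => Finset.univ.image fun p : A × L => h.extend p.1 p.2

variable [Fintype L] [DecidableEq L] [Fintype A] [DecidableEq A]

/-- The outcome `X_n^α` : the distribution over states at step `n` under strategy `α`. -/
noncomputable def outcome (μ0 : L → ℝ) (δ : L → A → L → ℝ) (α : Hist L A → A → ℝ)
    (n : ℕ) (l : L) : ℝ :=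
  ∑ h ∈ (hists L A n).filter (fun h => h.last = l), pr μ0 δ α h

/-- The norm `‖X‖ = max_{ℓ ∈ L} X(ℓ)` of a distribution on a (nonempty) finite type. -/
noncomputable def dnorm (X : L → ℝ) : ℝ := ⨆ l, X l

/-- Strongly synchronizing: `liminf_n ‖X_n^α‖ = 1`. -/
def StronglySync (μ0 : L → ℝ) (δ : L → A → L → ℝ) (α : Hist L A → A → ℝ) : Prop :=
  liminf (fun n => dnorm (outcome μ0 δ α n)) atTop = 1

/-- Weakly synchronizing: `limsup_n ‖X_n^α‖ = 1`. -/
def WeaklySync (μ0 : L → ℝ) (δ : L → A → L → ℝ) (α : Hist L A → A → ℝ) : Prop :=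
  limsup (fun n => dnorm (outcome μ0 δ α n)) atTop = 1

open Classical in
/-- `Post_σ(ℓ)`: the support of `δ(ℓ,σ)`. -/
noncomputable def post (δ : L → A → L → ℝ) (l : L) (a : A) : Finset L :=
  Finset.univ.filter fun l' => 0 < δ l a l'

/-- Transition function of the perfect-information subset construction. -/
noncomputable def deltaP (δ : L → A → L → ℝ) (s : Finset L) (f : L → A) : Finset L :=
  s.biUnion fun l => post δ l (f l)

/-- Transition function of the blind subset construction. -/
noncomputable def deltaB (δ : L → A → L → ℝ) (s : Finset L) (a : A) : Finset L :=
  s.biUnion fun l => post δ l a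

open Classical in
/-- The initial cell: the support of `μ0`. -/
noncomputable def initCell (μ0 : L → ℝ) : Finset L :=
  Finset.univ.filter fun l => 0 < μ0 l

/-- Reachability of a cell from the initial cell in the perfect-information
subset construction. -/
def ReachP (μ0 : L → ℝ) (δ : L → A → L → ℝ) (s : Finset L) : Prop :=
  Relation.ReflTransGen (fun t t' => ∃ f : L → A, deltaP δ t f = t') (initCell μ0) s

/-- Reachability of a cell from the initial cell in the blind subset construction. -/
def ReachB (μ0 : L → ℝ) (δ : L → A → L → ℝ) (s : Finset L) : Prop :=
  Relation.ReflTransGen (fun t t' => ∃ a : A, deltaB δ t a = t') (initCell μ0) s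

/-- Cyclic successor on `Fin d`. -/
def cyc {d : ℕ} (hd : 0 < d) (i : Fin d) : Fin d := ⟨((i : ℕ) + 1) % d, Nat.mod_lt _ hd⟩

/-- A recurrent cyclic set for the cycle `(s, act)` of length `d` of the
perfect-information subset construction. -/
def IsRCSP {d : ℕ} (hd : 0 < d) (δ : L → A → L → ℝ) (s : Fin d → Finset L)
    (act : Fin d → L → A) (g : Fin d → Finset L) : Prop :=
  ∀ i : Fin d, (g i).Nonempty ∧ g i ⊆ s i ∧
    (g i).biUnion (fun l => post δ l (act i l)) = g (cyc hd i)

/-- A minimal recurrent cyclic set (perfect-information). -/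
def IsMinRCSP {d : ℕ} (hd : 0 < d) (δ : L → A → L → ℝ) (s : Fin d → Finset L)
    (act : Fin d → L → A) (g : Fin d → Finset L) : Prop :=
  IsRCSP hd δ s act g ∧
    ∀ g' : Fin d → Finset L, IsRCSP hd δ s act g' → (∀ i, g' i ⊆ g i) → g' = g

/-- A recurrent cyclic set for the cycle `(s, act)` of length `d` of the blind
subset construction. -/
def IsRCSB {d : ℕ} (hd : 0 < d) (δ : L → A → L → ℝ) (s : Fin d → Finset L)
    (act : Fin d → A) (g : Fin d → Finset L) : Prop :=
  ∀ i : Fin d, (g i).Nonempty ∧ g i ⊆ s i ∧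
    (g i).biUnion (fun l => post δ l (act i)) = g (cyc hd i)

/-- A minimal recurrent cyclic set (blind). -/
def IsMinRCSB {d : ℕ} (hd : 0 < d) (δ : L → A → L → ℝ) (s : Fin d → Finset L)
    (act : Fin d → A) (g : Fin d → Finset L) : Prop :=
  IsRCSB hd δ s act g ∧
    ∀ g' : Fin d → Finset L, IsRCSB hd δ s act g' → (∀ i, g' i ⊆ g i) → g' = g


open Topology

section Histories

omit [Fintype L] [DecidableEq L] [Fintype A] [DecidableEq A]

namespace Hist

@[simp] lemma len_extend (h : Hist L A) (a : A) (l : L) : (h.extend a l).len = h.len + 1 := by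
  simp [extend, len]

@[simp] lemma last_extend (h : Hist L A) (a : A) (l : L) : (h.extend a l).last = l := by
  simp [extend, last]

@[elab_as_elim]
lemma extend_induction {motive : Hist L A → Prop} (start : ∀ l, motive ⟨l, []⟩)
    (extend : ∀ h a l, motive h → motive (h.extend a l)) (h : Hist L A) : motive h := by
  obtain ⟨l, steps⟩ := h
  induction steps using List.reverseRecOn with
  | nil => exact start l
  | append_singleton steps p ih => exact extend ⟨l, steps⟩ p.1 p.2 ih

lemma extend_injective :
    Function.Injective fun x : Hist L A × A × L => x.1.extend x.2.1 x.2.2 := by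
  rintro ⟨⟨l, st⟩, a, s⟩ ⟨⟨l', st'⟩, a', s'⟩ he
  simp only [extend, mk.injEq] at he
  obtain ⟨hst, hp⟩ := List.append_inj' he.2 rfl
  simp_all

def take (m : ℕ) (h : Hist L A) : Hist L A := ⟨h.start, h.steps.take m⟩

@[simp] lemma len_take (h : Hist L A) (m : ℕ) : (h.take m).len = min m h.len := by
  simp [take, len]

lemma take_of_len_le {h : Hist L A} {m : ℕ} (hm : h.len ≤ m) : h.take m = h := by
  simp [take, List.take_of_length_le hm]

lemma take_zero (h : Hist L A) : h.take 0 = ⟨h.start, []⟩ := rfl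

lemma take_take (h : Hist L A) (m k : ℕ) : (h.take m).take k = h.take (min k m) := by
  simp [take, List.take_take]

lemma take_extend (h : Hist L A) (a : A) (l : L) (m : ℕ) :
    (h.extend a l).take m = if m ≤ h.len then h.take m else h.extend a l := by
  split_ifs with hm
  · simp [take, extend, List.take_append_of_le_length hm]
  · exact take_of_len_le (by simp; omega)

lemma take_succ {h : Hist L A} {m : ℕ} (hm : m < h.len) :
    ∃ a l, h.take (m + 1) = (h.take m).extend a l := by
  refine ⟨h.steps[m].1, h.steps[m].2, ?_⟩
  simp only [take, extend, mk.injEq, true_and]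
  rw [List.take_add_one, List.getElem?_eq_getElem (show m < h.steps.length from hm)]
  rfl

end Hist

def statePhase (P : ℕ) (h : Hist L A) : L × ZMod P := (h.last, h.len)

@[simp] lemma statePhase_extend (P : ℕ) (h : Hist L A) (a : A) (l : L) :
    statePhase P (h.extend a l) = (l, (statePhase P h).2 + 1) := by
  simp [statePhase]

variable {μ0 : L → ℝ} {δ : L → A → L → ℝ} {α : Hist L A → A → ℝ}

@[simp] lemma pr_start (l : L) : pr μ0 δ α ⟨l, []⟩ = μ0 l := by
  simp [pr, prAux]

lemma prAux_append_singleton (cur : L) (pre : Hist L A) (xs : List (A × L)) (a : A) (l : L) :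
    prAux δ α cur pre (xs ++ [(a, l)]) = prAux δ α cur pre xs *
      (α ⟨pre.start, pre.steps ++ xs⟩ a * δ (xs.foldl (fun _ p => p.2) cur) a l) := by
  induction xs generalizing cur pre with
  | nil => simp [prAux]
  | cons p xs ih =>
    obtain ⟨b, s⟩ := p
    simp [prAux, ih, Hist.extend, mul_assoc]

lemma pr_extend (h : Hist L A) (a : A) (l : L) :
    pr μ0 δ α (h.extend a l) = pr μ0 δ α h * (α h a * δ h.last a l) := by
  simp [pr, Hist.extend, prAux_append_singleton, Hist.last, mul_assoc]

end Histories

section Positivity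

omit [Fintype L] [DecidableEq L] [Fintype A] [DecidableEq A]

variable {μ0 : L → ℝ} {δ : L → A → L → ℝ} {α : Hist L A → A → ℝ}
  (hμ : 0 ≤ μ0) (hδ : 0 ≤ δ) (hα : 0 ≤ α)
include hμ hδ hα

lemma pr_nonneg (h : Hist L A) : 0 ≤ pr μ0 δ α h := by
  induction h using Hist.extend_induction with
  | start l => simpa using hμ l
  | extend h a l ih => rw [pr_extend]; exact mul_nonneg ih (mul_nonneg (hα h a) (hδ _ a l))

lemma pr_extend_pos_iff {h : Hist L A} {a : A} {l : L} :
    0 < pr μ0 δ α (h.extend a l) ↔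
      0 < pr μ0 δ α h ∧ 0 < α h a ∧ 0 < δ h.last a l := by
  have hp := pr_nonneg hμ hδ hα h
  rw [pr_extend, mul_pos_iff, mul_pos_iff]
  constructor
  · rintro (⟨h1, h2 | h2⟩ | ⟨h1, -⟩)
    · exact ⟨h1, h2⟩
    · exact absurd h2.1 (hα h a).not_gt
    · exact absurd h1 hp.not_gt
  · exact fun ⟨h1, h2⟩ => Or.inl ⟨h1, Or.inl h2⟩

lemma pr_take_pos {h : Hist L A} (m : ℕ) (hpos : 0 < pr μ0 δ α h) :
    0 < pr μ0 δ α (h.take m) := by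
  induction h using Hist.extend_induction with
  | start l => rwa [Hist.take_of_len_le (by simp [Hist.len])]
  | extend h a l ih =>
    rw [Hist.take_extend]
    split_ifs
    · exact ih ((pr_extend_pos_iff hμ hδ hα).1 hpos).1
    · exact hpos

lemma pr_pos_extension_induction (Q : Hist L A → Prop)
    (hstep : ∀ h a l, 0 < pr μ0 δ α (h.extend a l) → Q h → Q (h.extend a l))
    {h h' : Hist L A} (hQ : Q h) (hpos : 0 < pr μ0 δ α h') (htake : h'.take h.len = h) :
    Q h' := by
  induction h' using Hist.extend_induction with
  | start l =>
    rw [Hist.take_of_len_le (by simp [Hist.len])] at htake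
    rwa [htake]
  | extend h' a l ih =>
    rw [Hist.take_extend] at htake
    split_ifs at htake
    · exact hstep h' a l hpos (ih ((pr_extend_pos_iff hμ hδ hα).1 hpos).1 htake)
    · rwa [htake]

lemma pr_pos_induction (Q : Hist L A → Prop) (hstart : ∀ l, 0 < μ0 l → Q ⟨l, []⟩)
    (hstep : ∀ h a l, 0 < pr μ0 δ α (h.extend a l) → Q h → Q (h.extend a l))
    {h : Hist L A} (hpos : 0 < pr μ0 δ α h) : Q h :=
  pr_pos_extension_induction hμ hδ hα Q hstep (h := ⟨h.start, []⟩)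
    (hstart _ (by simpa [Hist.take_zero] using pr_take_pos hμ hδ hα 0 hpos)) hpos rfl

end Positivity

section Mass

lemma IsDist.le_one {S : Type} [Fintype S] {d : S → ℝ} (hd : IsDist d) (x : S) : d x ≤ 1 :=
  hd.2 ▸ Finset.single_le_sum (fun i _ => hd.1 i) (Finset.mem_univ x)

lemma IsDist.eq_zero_of_eq_one {S : Type} [Fintype S] {d : S → ℝ} (hd : IsDist d) {x y : S}
    (hx : d x = 1) (hy : y ≠ x) : d y = 0 := by
  classical
  have hrest : ∑ s ∈ Finset.univ.erase x, d s = 0 := by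
    linarith [Finset.add_sum_erase Finset.univ d (Finset.mem_univ x), hd.2]
  exact (Finset.sum_eq_zero_iff_of_nonneg fun i _ => hd.1 i).1 hrest y (by simp [hy])

lemma IsDist.exists_pos {S : Type} [Fintype S] {d : S → ℝ} (hd : IsDist d) :
    ∃ s, 0 < d s := by
  by_contra! h
  linarith [hd.2, Finset.sum_nonpos fun s (_ : s ∈ Finset.univ) => h s]

omit [DecidableEq L] [Fintype A] [DecidableEq A] in
lemma IsTrans.nonneg {δ : L → A → L → ℝ} (hδ : IsTrans δ) : 0 ≤ δ :=
  fun l a => (hδ l a).1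

omit [Fintype L] [DecidableEq L] [DecidableEq A] in
lemma IsStrategy.nonneg {α : Hist L A → A → ℝ} (hα : IsStrategy α) : 0 ≤ α :=
  fun h => (hα h).1

lemma mem_hists {n : ℕ} {h : Hist L A} : h ∈ hists L A n ↔ h.len = n := by
  induction n generalizing h with
  | zero =>
    obtain ⟨s, st⟩ := h
    simp [hists, Hist.len, List.length_eq_zero_iff, eq_comm]
  | succ n ih =>
    simp only [hists, Finset.mem_biUnion, Finset.mem_image, Finset.mem_univ, true_and, ih]
    constructor
    · rintro ⟨h₀, rfl, p, rfl⟩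
      simp
    · intro hlen
      obtain ⟨a, l, hal⟩ := Hist.take_succ (m := n) (h := h) (by omega)
      refine ⟨h.take n, by simp; omega, (a, l), ?_⟩
      rw [← hal, Hist.take_of_len_le hlen.le]

lemma sum_hists_succ {M : Type*} [AddCommMonoid M] (n : ℕ) (g : Hist L A → M) :
    ∑ h ∈ hists L A (n + 1), g h =
      ∑ h ∈ hists L A n, ∑ p : A × L, g (h.extend p.1 p.2) := by
  have : hists L A (n + 1) = (hists L A n ×ˢ Finset.univ).image
      fun x : Hist L A × A × L => x.1.extend x.2.1 x.2.2 := by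
    ext h; simp [hists]
  rw [this, Finset.sum_image Hist.extend_injective.injOn, Finset.sum_product]

lemma sum_hists_add {M : Type*} [AddCommMonoid M] (m k : ℕ) (g : Hist L A → M) :
    ∑ h ∈ hists L A (m + k), g h =
      ∑ h ∈ hists L A m, ∑ h' ∈ (hists L A (m + k)).filter (·.take m = h), g h' := by
  refine (Finset.sum_fiberwise_of_maps_to (fun h' hh' => ?_) g).symm
  rw [mem_hists] at hh' ⊢
  simp [hh']

variable {μ0 : L → ℝ} {δ : L → A → L → ℝ} {α : Hist L A → A → ℝ}

omit [DecidableEq L] [DecidableEq A] in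
lemma sum_pr_extend (hδ : IsTrans δ) (hα : IsStrategy α) (h : Hist L A) :
    ∑ p : A × L, pr μ0 δ α (h.extend p.1 p.2) = pr μ0 δ α h := by
  simp only [pr_extend, Fintype.sum_prod_type, ← Finset.mul_sum, (hδ _ _).2, mul_one,
    (hα h).2]

lemma sum_pr_extensions (hδ : IsTrans δ) (hα : IsStrategy α) (h : Hist L A) (k : ℕ) :
    ∑ h' ∈ (hists L A (h.len + k)).filter (·.take h.len = h), pr μ0 δ α h' =
      pr μ0 δ α h := by
  induction k with
  | zero =>
    have : (hists L A (h.len + 0)).filter (·.take h.len = h) = {h} := by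
      ext h'
      simp only [Finset.mem_filter, mem_hists, Finset.mem_singleton, add_zero]
      constructor
      · rintro ⟨hlen, htake⟩
        exact (Hist.take_of_len_le hlen.le).symm.trans htake
      · rintro rfl
        exact ⟨rfl, Hist.take_of_len_le le_rfl⟩
    rw [this, Finset.sum_singleton]
  | succ k ih =>
    rw [← add_assoc, Finset.sum_filter, sum_hists_succ, ← ih, Finset.sum_filter]
    refine Finset.sum_congr rfl fun h' hh' => ?_
    have hle : h.len ≤ h'.len := by rw [mem_hists.1 hh']; omega
    simp only [Hist.take_extend, hle, if_true]
    split_ifs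
    · exact sum_pr_extend hδ hα h'
    · simp

lemma sum_pr_hists (hμ0 : IsDist μ0) (hδ : IsTrans δ) (hα : IsStrategy α) (n : ℕ) :
    ∑ h ∈ hists L A n, pr μ0 δ α h = 1 := by
  rw [← zero_add n, sum_hists_add]
  calc ∑ h ∈ hists L A 0, ∑ h' ∈ (hists L A (0 + n)).filter (·.take 0 = h), pr μ0 δ α h'
      = ∑ h ∈ hists L A 0, pr μ0 δ α h := Finset.sum_congr rfl fun h hh => by
        simpa [mem_hists.1 hh] using sum_pr_extensions hδ hα h n
    _ = ∑ l, μ0 l := by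
        rw [show hists L A 0 = Finset.univ.image fun l => ⟨l, []⟩ from rfl,
          Finset.sum_image fun _ _ _ _ h => congrArg Hist.start h]
        simp
    _ = 1 := hμ0.2

end Mass

section Outcome

omit [DecidableEq L] in
lemma le_dnorm (X : L → ℝ) (l : L) : X l ≤ dnorm X :=
  le_ciSup (Set.finite_range X).bddAbove l

omit [DecidableEq L] in
lemma exists_dnorm_eq [Nonempty L] (X : L → ℝ) : ∃ l, dnorm X = X l := by
  obtain ⟨l, -, hl⟩ := Finset.exists_max_image Finset.univ X Finset.univ_nonempty
  exact ⟨l, le_antisymm (ciSup_le fun l' => hl l' (Finset.mem_univ l')) (le_dnorm X l)⟩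

omit [DecidableEq L] in
lemma IsDist.dnorm_le_one [Nonempty L] {X : L → ℝ} (hX : IsDist X) : dnorm X ≤ 1 :=
  ciSup_le hX.le_one

variable {μ0 : L → ℝ} {δ : L → A → L → ℝ} {α : Hist L A → A → ℝ}

lemma outcome_succ (n : ℕ) (l' : L) :
    outcome μ0 δ α (n + 1) l' =
      ∑ h ∈ hists L A n, pr μ0 δ α h * ∑ a, α h a * δ h.last a l' := by
  simp only [outcome, Finset.sum_filter, sum_hists_succ, Hist.last_extend, pr_extend,
    Fintype.sum_prod_type, Finset.sum_ite_eq', Finset.mem_univ, if_true, Finset.mul_sum]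

variable (hμ0 : IsDist μ0) (hδ : IsTrans δ) (hα : IsStrategy α)
include hμ0 hδ hα

lemma isDist_outcome (n : ℕ) : IsDist (outcome μ0 δ α n) := by
  refine ⟨fun l => Finset.sum_nonneg fun h _ => pr_nonneg hμ0.1 hδ.nonneg hα.nonneg h, ?_⟩
  rw [← sum_pr_hists hμ0 hδ hα n]
  exact Finset.sum_fiberwise_of_maps_to (fun h _ => Finset.mem_univ h.last) _

lemma sum_pr_last_ne (n : ℕ) (l : L) :
    ∑ h ∈ (hists L A n).filter (¬ ·.last = l), pr μ0 δ α h =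
      1 - outcome μ0 δ α n l := by
  have := Finset.sum_filter_add_sum_filter_not (hists L A n) (·.last = l) (pr μ0 δ α)
  rw [sum_pr_hists hμ0 hδ hα n] at this
  rw [outcome]
  linarith

lemma outcome_succ_le {l l' : L} {m : ℝ} (hm : ∀ a, δ l a l' ≤ m) (n : ℕ) :
    outcome μ0 δ α (n + 1) l' ≤ m * outcome μ0 δ α n l + (1 - outcome μ0 δ α n l) := by
  have hpr := pr_nonneg (α := α) hμ0.1 hδ.nonneg hα.nonneg
  set w : Hist L A → ℝ := fun h => ∑ a, α h a * δ h.last a l'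
  have hw_le_one (h : Hist L A) : w h ≤ 1 :=
    (hα h).2 ▸ Finset.sum_le_sum fun a _ =>
      mul_le_of_le_one_right ((hα h).1 a) ((hδ _ a).le_one l')
  have hw_le_m (h : Hist L A) (hl : h.last = l) : w h ≤ m := by
    calc w h ≤ ∑ a, α h a * m :=
          Finset.sum_le_sum fun a _ => mul_le_mul_of_nonneg_left (hl ▸ hm a) ((hα h).1 a)
      _ = m := by rw [← Finset.sum_mul, (hα h).2, one_mul]
  have hat : ∑ h ∈ (hists L A n).filter (·.last = l), pr μ0 δ α h * w h ≤
      m * outcome μ0 δ α n l := by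
    rw [outcome, Finset.mul_sum]
    refine Finset.sum_le_sum fun h hh => ?_
    rw [mul_comm m]
    exact mul_le_mul_of_nonneg_left (hw_le_m h (Finset.mem_filter.1 hh).2) (hpr h)
  have hoff : ∑ h ∈ (hists L A n).filter (¬ ·.last = l), pr μ0 δ α h * w h ≤
      1 - outcome μ0 δ α n l :=
    sum_pr_last_ne hμ0 hδ hα n l ▸
      Finset.sum_le_sum fun h _ => mul_le_of_le_one_right (hpr h) (hw_le_one h)
  rw [outcome_succ, ← Finset.sum_filter_add_sum_filter_not _ (·.last = l)]
  linarith

lemma exists_extension_last_eq {h : Hist L A} {n : ℕ} (hn : h.len ≤ n)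
    {l : L} (hl : 1 - pr μ0 δ α h < outcome μ0 δ α n l) :
    ∃ h' ∈ hists L A n, h'.take h.len = h ∧ 0 < pr μ0 δ α h' ∧ h'.last = l := by
  by_contra! hno
  have hpr := pr_nonneg (α := α) hμ0.1 hδ.nonneg hα.nonneg
  have hrest : ∑ h' ∈ (hists L A n).filter (¬ ·.take h.len = h), pr μ0 δ α h' =
      1 - pr μ0 δ α h := by
    have := Finset.sum_filter_add_sum_filter_not (hists L A n) (·.take h.len = h) (pr μ0 δ α)
    have hext := sum_pr_extensions (μ0 := μ0) hδ hα h (n - h.len)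
    rw [Nat.add_sub_cancel' hn] at hext
    rw [sum_pr_hists hμ0 hδ hα n, hext] at this
    linarith
  have : outcome μ0 δ α n l ≤
      ∑ h' ∈ (hists L A n).filter (¬ ·.take h.len = h), pr μ0 δ α h' := by
    rw [outcome, ← Finset.sum_filter_of_ne (p := (¬ ·.take h.len = h))]
    · exact Finset.sum_le_sum_of_subset_of_nonneg
        (Finset.filter_subset_filter _ (Finset.filter_subset _ _)) fun h' _ _ => hpr h'
    · intro h' hh' hne htake
      simp only [Finset.mem_filter] at hh'
      exact hno h' hh'.1 htake (lt_of_le_of_ne (hpr h') (Ne.symm hne)) hh'.2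
  linarith

end Outcome

section Spine

lemma exists_gap_below {X : Type*} [Finite X] (g : X → ℝ) (c : ℝ) :
    ∃ c' < c, ∀ x, g x < c → g x ≤ c' := by
  classical
  have := Fintype.ofFinite X
  by_cases hne : (Finset.univ.filter (g · < c)).Nonempty
  · exact ⟨_, (Finset.sup'_lt_iff hne).2 fun x hx => (Finset.mem_filter.1 hx).2,
      fun x hx => Finset.le_sup' g (Finset.mem_filter.2 ⟨Finset.mem_univ x, hx⟩)⟩
  · exact ⟨c - 1, by linarith, fun x hx => absurd ⟨x, by simpa using hx⟩ hne⟩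

lemma exists_pos_le_of_pos {X : Type*} [Finite X] (g : X → ℝ) :
    ∃ η, 0 < η ∧ η ≤ 1 ∧ ∀ x, 0 < g x → η ≤ g x := by
  obtain ⟨c, hc, hgc⟩ := exists_gap_below (fun x => -g x) 0
  exact ⟨min (-c) 1, lt_min (by linarith) one_pos, min_le_right _ _,
    fun x hx => (min_le_left _ _).trans (by linarith [hgc x (by linarith)])⟩

lemma exists_cycle_frequently {S : Type*} [Finite S] {E : S → S → Prop} {ls : ℕ → S}
    (hE : ∀ᶠ n in atTop, E (ls n) (ls (n + 1))) :
    ∃ (P : ℕ) (_ : NeZero P) (s : ZMod P → S), (∀ k, E (s k) (s (k + 1))) ∧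
      ∃ᶠ t in atTop, ls t = s t := by
  obtain ⟨N, hN⟩ := eventually_atTop.1 hE
  obtain ⟨x, hx⟩ : ∃ x, ∃ᶠ t in atTop, ls t = x :=
    frequently_exists.1 (Frequently.of_forall fun t => ⟨ls t, rfl⟩)
  obtain ⟨n₁, hn₁, hx₁⟩ := frequently_atTop.1 hx N
  obtain ⟨n₂, hn₂, hx₂⟩ := frequently_atTop.1 hx (n₁ + 1)
  obtain ⟨P, rfl⟩ := Nat.exists_eq_add_of_lt hn₂
  obtain ⟨c, hc⟩ :
      ∃ c : ZMod (P + 1), ∃ᶠ t in atTop, ls t = x ∧ (t : ZMod (P + 1)) = c :=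
    frequently_exists.1 (hx.mono fun t ht => ⟨t, ht, rfl⟩)
  refine ⟨P + 1, inferInstance, fun k => ls (n₁ + (k - c).val), fun k => ?_, hc.mono ?_⟩
  · have hval : (k + 1 - c).val = ((k - c).val + 1) % (P + 1) := by
      rw [add_sub_right_comm, ZMod.val_add, ZMod.val_one_eq_one_mod, Nat.add_mod_mod]
    have hlt := ZMod.val_lt (k - c)
    simp only [hval]
    rcases (show (k - c).val + 1 ≤ P + 1 by omega).lt_or_eq with hj | hj
    · rw [Nat.mod_eq_of_lt hj]
      exact hN _ (by omega)
    · rw [hj, Nat.mod_self, add_zero, hx₁, ← hx₂,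
        show n₁ + P + 1 = n₁ + (k - c).val + 1 by omega]
      exact hN _ (by omega)
  · rintro t ⟨hxt, htc⟩
    simp [htc, hxt, hx₁]

variable {μ0 : L → ℝ} {δ : L → A → L → ℝ} {α : Hist L A → A → ℝ}
  (hμ0 : IsDist μ0) (hδ : IsTrans δ) (hα : IsStrategy α)
include hμ0 hδ hα

lemma StronglySync.exists_tendsto (hsync : StronglySync μ0 δ α) :
    ∃ ls : ℕ → L, Tendsto (fun n => outcome μ0 δ α n (ls n)) atTop (𝓝 1) := by
  have : Nonempty L := ⟨hμ0.exists_pos.choose⟩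
  choose ls hls using fun n => exists_dnorm_eq (outcome μ0 δ α n)
  refine ⟨ls, ?_⟩
  simp only [← hls]
  have hle (n : ℕ) := (isDist_outcome hμ0 hδ hα n).dnorm_le_one
  have hge (n : ℕ) := ((isDist_outcome hμ0 hδ hα n).1 (ls n)).trans (le_dnorm _ (ls n))
  exact tendsto_of_le_liminf_of_limsup_le hsync.ge
    (limsup_le_of_le (isCoboundedUnder_le_of_le atTop hge) (Eventually.of_forall hle))
    (isBoundedUnder_of ⟨1, hle⟩) (isBoundedUnder_of ⟨0, hge⟩)

lemma eventually_exists_dirac_step {ls : ℕ → L}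
    (hls : Tendsto (fun n => outcome μ0 δ α n (ls n)) atTop (𝓝 1)) :
    ∀ᶠ n in atTop, ∃ a, δ (ls n) a (ls (n + 1)) = 1 := by
  obtain ⟨θ, hθ1, hθ⟩ := exists_gap_below (fun x : L × A × L => δ x.1 x.2.1 x.2.2) 1
  set θ' := max θ 0
  have hθ'1 : θ' < 1 := max_lt hθ1 one_pos
  have hev := (tendsto_order.1 hls).1 ((1 + θ') / 2) (by linarith)
  filter_upwards [hev, (tendsto_add_atTop_nat 1).eventually hev] with n hn hn1
  by_contra! hne
  have hle (a : A) : δ (ls n) a (ls (n + 1)) ≤ θ' :=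
    le_max_of_le_left (hθ (ls n, a, ls (n + 1)) ((hδ _ a).le_one _ |>.lt_of_ne (hne a)))
  have := outcome_succ_le hμ0 hδ hα hle n
  nlinarith [mul_pos (sub_pos.2 hθ'1) (sub_pos.2 hn), le_max_right θ 0]

lemma exists_extension_phase_mem {ls : ℕ → L}
    (hls : Tendsto (fun n => outcome μ0 δ α n (ls n)) atTop (𝓝 1)) {P : ℕ}
    {D : Set (L × ZMod P)} (hD : ∃ᶠ t in atTop, (ls t, (t : ZMod P)) ∈ D) {h : Hist L A}
    (hh : 0 < pr μ0 δ α h) :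
    ∃ h', h'.take h.len = h ∧ 0 < pr μ0 δ α h' ∧ statePhase P h' ∈ D := by
  have hev := (tendsto_order.1 hls).1 (1 - pr μ0 δ α h) (by linarith)
  obtain ⟨t, ⟨hlt, hle⟩, htD⟩ :=
    ((hev.and (eventually_ge_atTop h.len)).and_frequently hD).exists
  obtain ⟨h', hh', htake, hpos, hlast⟩ := exists_extension_last_eq hμ0 hδ hα hle hlt
  refine ⟨h', htake, hpos, ?_⟩
  rwa [statePhase, hlast, mem_hists.1 hh']

end Spine

section Ranking

omit [Fintype L] [DecidableEq L] [Fintype A] [DecidableEq A]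

variable {μ0 : L → ℝ} {δ : L → A → L → ℝ} {α : Hist L A → A → ℝ}

def reachTimes (μ0 : L → ℝ) (δ : L → A → L → ℝ) (α : Hist L A → A → ℝ) (P : ℕ)
    (D : Set (L × ZMod P)) (w : L × ZMod P) : Set ℕ :=
  {k | ∃ h h', 0 < pr μ0 δ α h' ∧ h'.take h.len = h ∧ h'.len = h.len + k ∧
    statePhase P h = w ∧ statePhase P h' ∈ D}

noncomputable def reachDist (μ0 : L → ℝ) (δ : L → A → L → ℝ) (α : Hist L A → A → ℝ) (P : ℕ)
    (D : Set (L × ZMod P)) (w : L × ZMod P) : ℕ :=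
  sInf (reachTimes μ0 δ α P D w)

/-- The action is the first one `α` plays along a shortest positive extension into `D`. -/
lemma exists_action_reachDist_lt (hμ : 0 ≤ μ0) (hδ : 0 ≤ δ) (hα : 0 ≤ α) {P : ℕ}
    {D : Set (L × ZMod P)}
    (hreach : ∀ h, 0 < pr μ0 δ α h →
      ∃ h', h'.take h.len = h ∧ 0 < pr μ0 δ α h' ∧ statePhase P h' ∈ D)
    {w : L × ZMod P} (hw : w ∈ statePhase P '' {h | 0 < pr μ0 δ α h}) (hwD : w ∉ D) :
    ∃ a, (∀ l, 0 < δ w.1 a l → (l, w.2 + 1) ∈ statePhase P '' {h | 0 < pr μ0 δ α h}) ∧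
      ∃ l, 0 < δ w.1 a l ∧ reachDist μ0 δ α P D (l, w.2 + 1) < reachDist μ0 δ α P D w := by
  obtain ⟨h₀, hpos₀, hw₀⟩ := hw
  obtain ⟨h₁, htake₁, hpos₁, hD₁⟩ := hreach h₀ hpos₀
  have hlen₁ : h₀.len ≤ h₁.len := by simpa using congrArg Hist.len htake₁
  obtain ⟨h, h', hpos', htake, hlen, rfl, hD'⟩ :
      reachDist μ0 δ α P D w ∈ reachTimes μ0 δ α P D w :=
    Nat.sInf_mem ⟨h₁.len - h₀.len, h₀, h₁, hpos₁, htake₁, by omega, hw₀, hD₁⟩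
  have hdist : reachDist μ0 δ α P D (statePhase P h) ≠ 0 := by
    intro h0
    rw [h0, add_zero] at hlen
    rw [Hist.take_of_len_le hlen.le] at htake
    exact hwD (htake ▸ hD')
  obtain ⟨a, l, hal⟩ := Hist.take_succ (h := h') (m := h.len) (by omega)
  rw [htake] at hal
  have hpos : 0 < pr μ0 δ α (h.extend a l) := hal ▸ pr_take_pos hμ hδ hα _ hpos'
  obtain ⟨hposh, hαa, hδa⟩ := (pr_extend_pos_iff hμ hδ hα).1 hpos
  refine ⟨a, fun l' hl' => ⟨h.extend a l', ?_, by simp⟩, l, hδa, ?_⟩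
  · exact (pr_extend_pos_iff hμ hδ hα).2 ⟨hposh, hαa, hl'⟩
  · have : reachDist μ0 δ α P D (statePhase P (h.extend a l)) ≤
        reachDist μ0 δ α P D (statePhase P h) - 1 :=
      Nat.sInf_le ⟨h.extend a l, h', hpos', by simpa using hal, by simp; omega, rfl, hD'⟩
    simp only [statePhase_extend] at this
    omega

lemma exists_ranked_action [Nonempty A] (hμ : 0 ≤ μ0) (hδ : 0 ≤ δ) (hα : 0 ≤ α)
    (P : ℕ) (D : Set (L × ZMod P))
    (hreach : ∀ h, 0 < pr μ0 δ α h →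
      ∃ h', h'.take h.len = h ∧ 0 < pr μ0 δ α h' ∧ statePhase P h' ∈ D) :
    ∃ (f : L × ZMod P → A) (R : L × ZMod P → ℕ),
      ∀ w ∈ statePhase P '' {h | 0 < pr μ0 δ α h}, w ∉ D →
        (∀ l, 0 < δ w.1 (f w) l →
          (l, w.2 + 1) ∈ statePhase P '' {h | 0 < pr μ0 δ α h}) ∧
        ∃ l, 0 < δ w.1 (f w) l ∧ R (l, w.2 + 1) < R w := by
  classical
  choose! f hf using fun w (hw : w ∈ statePhase P '' {h | 0 < pr μ0 δ α h} ∧ w ∉ D) =>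
    exists_action_reachDist_lt hμ hδ hα hreach hw.1 hw.2
  exact ⟨f, reachDist μ0 δ α P D, fun w hw hwD => hf w ⟨hw, hwD⟩⟩

end Ranking

section Pure

def pureOf (g : Hist L A → A) : Hist L A → A → ℝ := fun h a => if a = g h then 1 else 0

omit [Fintype L] [DecidableEq L] [Fintype A] in
lemma pureOf_nonneg (g : Hist L A → A) : 0 ≤ pureOf g :=
  fun h a => by unfold pureOf; split_ifs <;> norm_num

omit [Fintype L] [DecidableEq L] in
lemma isStrategy_pureOf (g : Hist L A → A) : IsStrategy (pureOf g) :=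
  fun h => ⟨pureOf_nonneg g h, by simp [pureOf]⟩

omit [Fintype L] [DecidableEq L] [Fintype A] in
lemma pureStrat_pureOf (g : Hist L A → A) : PureStrat (pureOf g) :=
  fun h => ⟨g h, if_pos rfl⟩

omit [Fintype L] [DecidableEq L] [Fintype A] in
lemma pr_pureOf_extend_pos_iff {μ0 : L → ℝ} {δ : L → A → L → ℝ} (hμ : 0 ≤ μ0)
    (hδ : 0 ≤ δ) {g : Hist L A → A} {h : Hist L A} {a : A} {l : L} :
    0 < pr μ0 δ (pureOf g) (h.extend a l) ↔
      0 < pr μ0 δ (pureOf g) h ∧ a = g h ∧ 0 < δ h.last a l := by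
  rw [pr_extend_pos_iff hμ hδ (pureOf_nonneg g)]
  by_cases ha : a = g h <;> simp [pureOf, ha]

omit [Fintype L] [DecidableEq L] [Fintype A] in
lemma pr_pureOf_extend_self {μ0 : L → ℝ} {δ : L → A → L → ℝ} (g : Hist L A → A)
    (h : Hist L A) (l : L) :
    pr μ0 δ (pureOf g) (h.extend (g h) l) = pr μ0 δ (pureOf g) h * δ h.last (g h) l := by
  simp [pr_extend, pureOf]

end Pure

lemma tendsto_one_of_contraction {G : ℕ → ℝ} {c : ℝ} {K : ℕ} (hK : 0 < K) (hc : 0 < c)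
    (hc1 : c ≤ 1) (hG0 : ∀ n, 0 ≤ G n) (hG1 : ∀ n, G n ≤ 1)
    (hG : ∀ n, 1 - G (n + K) ≤ (1 - c) * (1 - G n)) : Tendsto G atTop (𝓝 1) := by
  have hj (r j : ℕ) : 1 - G (r + K * j) ≤ (1 - c) ^ j := by
    induction j with
    | zero => simpa using hG0 r
    | succ j ih =>
      calc 1 - G (r + K * (j + 1)) ≤ (1 - c) * (1 - G (r + K * j)) := by
            rw [mul_add_one, ← add_assoc]; exact hG _
        _ ≤ (1 - c) * (1 - c) ^ j := mul_le_mul_of_nonneg_left ih (by linarith)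
        _ = (1 - c) ^ (j + 1) := (pow_succ' _ _).symm
  have hlow : Tendsto (fun n => 1 - (1 - c) ^ (n / K)) atTop (𝓝 1) := by
    simpa using ((tendsto_pow_atTop_nhds_zero_of_lt_one (by linarith) (by linarith)).comp
      (Nat.tendsto_div_const_atTop hK.ne')).const_sub (1 : ℝ)
  refine tendsto_of_tendsto_of_tendsto_of_le_of_le hlow tendsto_const_nhds (fun n => ?_) hG1
  have := hj (n % K) (n / K)
  rw [Nat.mod_add_div] at this
  show 1 - (1 - c) ^ (n / K) ≤ G n
  linarith

section Absorption

omit [DecidableEq L] [Fintype A] in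
abbrev phaseStrat (P : ℕ) (f : L × ZMod P → A) : Hist L A → A → ℝ :=
  pureOf fun h => f (statePhase P h)

variable {μ0 : L → ℝ} {δ : L → A → L → ℝ} {P : ℕ} {f : L × ZMod P → A}

omit [Fintype L] [DecidableEq L] [Fintype A] in
lemma phase_mem_extend (hμ : 0 ≤ μ0) (hδ : 0 ≤ δ) {S : Set (L × ZMod P)}
    (hS : ∀ w ∈ S, ∀ l, 0 < δ w.1 (f w) l → (l, w.2 + 1) ∈ S) (h : Hist L A) (a : A)
    (l : L) (hpos : 0 < pr μ0 δ (phaseStrat P f) (h.extend a l)) (hh : statePhase P h ∈ S) :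
    statePhase P (h.extend a l) ∈ S := by
  obtain ⟨-, rfl, hl⟩ := (pr_pureOf_extend_pos_iff hμ hδ).1 hpos
  simpa using hS _ hh l hl

variable {U D : Set (L × ZMod P)} {R : L × ZMod P → ℕ}
  (hinit : ∀ l, 0 < μ0 l → (l, 0) ∈ U)
  (hU : ∀ w ∈ U, ∀ l, 0 < δ w.1 (f w) l → (l, w.2 + 1) ∈ U)
  (hD : ∀ w ∈ D, ∀ l, 0 < δ w.1 (f w) l → (l, w.2 + 1) ∈ D)
  (hR : ∀ w ∈ U, w ∉ D → ∃ l, 0 < δ w.1 (f w) l ∧ R (l, w.2 + 1) < R w)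

omit [Fintype L] [DecidableEq L] [Fintype A] in
include hinit hU in
lemma phase_mem_of_pr_pos (hμ : 0 ≤ μ0) (hδ : 0 ≤ δ) {h : Hist L A}
    (hh : 0 < pr μ0 δ (phaseStrat P f) h) : statePhase P h ∈ U :=
  pr_pos_induction hμ hδ (pureOf_nonneg _) (statePhase P · ∈ U)
    (fun l hl => by simpa [statePhase, Hist.len, Hist.last] using hinit l hl)
    (phase_mem_extend hμ hδ hU) hh

omit [Fintype L] [DecidableEq L] [Fintype A] in
include hD in
lemma phase_mem_of_extension (hμ : 0 ≤ μ0) (hδ : 0 ≤ δ) {h h' : Hist L A}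
    (hh : statePhase P h ∈ D) (hpos : 0 < pr μ0 δ (phaseStrat P f) h')
    (htake : h'.take h.len = h) : statePhase P h' ∈ D :=
  pr_pos_extension_induction hμ hδ (pureOf_nonneg _) (statePhase P · ∈ D)
    (phase_mem_extend hμ hδ hD) hh hpos htake

omit [DecidableEq L] [Fintype A] in
include hU hD hR in
/-- The walk follows decreasing ranks into `D`, then stays in `D`. -/
lemma exists_extension_phase_mem_of_rank (hμ : 0 ≤ μ0) (hδ : IsTrans δ) {η : ℝ}
    (hη0 : 0 ≤ η) (hη : ∀ l a l', 0 < δ l a l' → η ≤ δ l a l') (k : ℕ)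
    {h : Hist L A} (hh : 0 < pr μ0 δ (phaseStrat P f) h)
    (hk : statePhase P h ∈ D ∨ statePhase P h ∈ U ∧ R (statePhase P h) ≤ k) :
    ∃ h', h'.take h.len = h ∧ h'.len = h.len + k ∧
      η ^ k * pr μ0 δ (phaseStrat P f) h ≤ pr μ0 δ (phaseStrat P f) h' ∧
      statePhase P h' ∈ D := by
  induction k generalizing h with
  | zero =>
    refine ⟨h, Hist.take_of_len_le le_rfl, rfl, by simp, hk.elim id fun ⟨hU', hR0⟩ => ?_⟩
    by_contra hD'
    obtain ⟨l, -, hlt⟩ := hR _ hU' hD'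
    omega
  | succ k ih =>
    set w := statePhase P h
    obtain ⟨l, hl, hnext⟩ : ∃ l, 0 < δ w.1 (f w) l ∧
        ((l, w.2 + 1) ∈ D ∨ (l, w.2 + 1) ∈ U ∧ R (l, w.2 + 1) ≤ k) := by
      by_cases hD' : w ∈ D
      · obtain ⟨l, hl⟩ := (hδ w.1 (f w)).exists_pos
        exact ⟨l, hl, Or.inl (hD w hD' l hl)⟩
      · obtain ⟨hU', hRk⟩ := hk.resolve_left hD'
        obtain ⟨l, hl, hlt⟩ := hR w hU' hD'
        exact ⟨l, hl, Or.inr ⟨hU w hU' l hl, by omega⟩⟩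
    have hpr : pr μ0 δ (phaseStrat P f) (h.extend (f w) l) =
        pr μ0 δ (phaseStrat P f) h * δ w.1 (f w) l := pr_pureOf_extend_self _ h l
    obtain ⟨h', htake, hlen, hpr', hD'⟩ := ih (hpr ▸ mul_pos hh hl) (by simpa [w] using hnext)
    refine ⟨h', ?_, by simp at hlen; omega, ?_, hD'⟩
    · simpa [Hist.take_take, Hist.take_extend, Hist.take_of_len_le]
        using congrArg (Hist.take h.len) htake
    · have hprh : 0 ≤ pr μ0 δ (phaseStrat P f) h :=
        pr_nonneg hμ hδ.nonneg (pureOf_nonneg _) h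
      calc η ^ (k + 1) * pr μ0 δ (phaseStrat P f) h
          ≤ η ^ k * (pr μ0 δ (phaseStrat P f) h * δ w.1 (f w) l) := by
            rw [pow_succ, mul_assoc, mul_comm η]
            exact mul_le_mul_of_nonneg_left
              (mul_le_mul_of_nonneg_left (hη _ _ _ hl) hprh) (pow_nonneg hη0 k)
        _ ≤ _ := hpr ▸ hpr'

def phaseMass (μ0 : L → ℝ) (δ : L → A → L → ℝ) (α : Hist L A → A → ℝ) (P : ℕ)
    (D : Set (L × ZMod P)) [DecidablePred (· ∈ D)] (n : ℕ) : ℝ :=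
  ∑ h ∈ (hists L A n).filter (statePhase P · ∈ D), pr μ0 δ α h

lemma phaseMass_le_outcome {α : Hist L A → A → ℝ} (hμ : 0 ≤ μ0) (hδ : 0 ≤ δ)
    (hα : 0 ≤ α) [DecidablePred (· ∈ D)] {tgt : ZMod P → L}
    (htgt : ∀ w ∈ D, w.1 = tgt w.2) (n : ℕ) :
    phaseMass μ0 δ α P D n ≤ outcome μ0 δ α n (tgt n) := by
  refine Finset.sum_le_sum_of_subset_of_nonneg (fun h hh => ?_)
    fun h _ _ => pr_nonneg hμ hδ hα h
  obtain ⟨hmem, hD⟩ := Finset.mem_filter.1 hh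
  refine Finset.mem_filter.2 ⟨hmem, ?_⟩
  simpa [statePhase, mem_hists.1 hmem] using htgt _ hD

include hinit hU hD hR in
lemma ite_le_sum_extensions_phase_mem (hμ0 : IsDist μ0) (hδ : IsTrans δ)
    [DecidablePred (· ∈ D)] {η : ℝ} (hη0 : 0 ≤ η)
    (hη : ∀ l a l', 0 < δ l a l' → η ≤ δ l a l') {K : ℕ} (hK : ∀ w, R w ≤ K)
    (h : Hist L A) :
    (if statePhase P h ∈ D then pr μ0 δ (phaseStrat P f) h
      else η ^ K * pr μ0 δ (phaseStrat P f) h) ≤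
    ∑ h' ∈ (hists L A (h.len + K)).filter (·.take h.len = h),
      if statePhase P h' ∈ D then pr μ0 δ (phaseStrat P f) h' else 0 := by
  have hpr := pr_nonneg (α := phaseStrat P f) hμ0.1 hδ.nonneg (pureOf_nonneg _)
  have hite (h' : Hist L A) :
      0 ≤ if statePhase P h' ∈ D then pr μ0 δ (phaseStrat P f) h' else 0 := by
    split_ifs
    exacts [hpr h', le_rfl]
  split_ifs with hDh
  · rw [← sum_pr_extensions hδ (isStrategy_pureOf _) h K]
    refine Finset.sum_le_sum fun h' hh' => ?_
    split_ifs with hD'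
    · exact le_rfl
    · exact not_lt.1 fun hpos => hD'
        (phase_mem_of_extension hD hμ0.1 hδ.nonneg hDh hpos (Finset.mem_filter.1 hh').2)
  rcases (hpr h).lt_or_eq with hpos | hzero
  · obtain ⟨h', htake, hlen, hle, hD'⟩ := exists_extension_phase_mem_of_rank hU hD hR
      hμ0.1 hδ hη0 hη K hpos
      (Or.inr ⟨phase_mem_of_pr_pos hinit hU hμ0.1 hδ.nonneg hpos, hK _⟩)
    calc η ^ K * pr μ0 δ (phaseStrat P f) h ≤ pr μ0 δ (phaseStrat P f) h' := hle
      _ = if statePhase P h' ∈ D then pr μ0 δ (phaseStrat P f) h' else 0 :=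
          (if_pos hD').symm
      _ ≤ _ := Finset.single_le_sum (fun h' _ => hite h')
            (Finset.mem_filter.2 ⟨mem_hists.2 hlen, htake⟩)
  · rw [← hzero, mul_zero]
    exact Finset.sum_nonneg fun h' _ => hite h'

include hinit hU hD hR in
/-- Within `K` steps every history sends the fraction `η ^ K` of its mass into `D`, and the
mass already in `D` stays there. -/
lemma one_sub_phaseMass_add_le (hμ0 : IsDist μ0) (hδ : IsTrans δ) [DecidablePred (· ∈ D)]
    {η : ℝ} (hη0 : 0 ≤ η) (hη : ∀ l a l', 0 < δ l a l' → η ≤ δ l a l') {K : ℕ}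
    (hK : ∀ w, R w ≤ K) (n : ℕ) :
    1 - phaseMass μ0 δ (phaseStrat P f) P D (n + K) ≤
      (1 - η ^ K) * (1 - phaseMass μ0 δ (phaseStrat P f) P D n) := by
  set β := phaseStrat P f
  have hlower := Finset.sum_le_sum fun h (hh : h ∈ hists L A n) => mem_hists.1 hh ▸
    ite_le_sum_extensions_phase_mem hinit hU hD hR hμ0 hδ hη0 hη hK h
  have hsplit := Finset.sum_filter_add_sum_filter_not (hists L A n) (statePhase P · ∈ D)
    (pr μ0 δ β)
  rw [sum_pr_hists hμ0 hδ (isStrategy_pureOf _)] at hsplit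
  rw [Finset.sum_ite, ← Finset.mul_sum, ← sum_hists_add, ← Finset.sum_filter,
    show ∑ h ∈ (hists L A n).filter (statePhase P · ∉ D), pr μ0 δ β h =
      1 - phaseMass μ0 δ β P D n by unfold phaseMass; linarith] at hlower
  calc _ ≤ 1 - (phaseMass μ0 δ β P D n + η ^ K * (1 - phaseMass μ0 δ β P D n)) := by
        unfold phaseMass at *; linarith
    _ = _ := by ring

include hinit hU hD hR in
theorem stronglySync_phaseStrat [NeZero P] (hμ0 : IsDist μ0) (hδ : IsTrans δ)
    {tgt : ZMod P → L} (htgt : ∀ w ∈ D, w.1 = tgt w.2) :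
    StronglySync μ0 δ (phaseStrat P f) := by
  classical
  have : Nonempty L := ⟨hμ0.exists_pos.choose⟩
  obtain ⟨η, hη0, hη1, hη⟩ := exists_pos_le_of_pos fun x : L × A × L => δ x.1 x.2.1 x.2.2
  have hX (n : ℕ) : IsDist (outcome μ0 δ (phaseStrat P f) n) :=
    isDist_outcome hμ0 hδ (isStrategy_pureOf _) n
  have hGX (n : ℕ) :
      phaseMass μ0 δ (phaseStrat P f) P D n ≤ dnorm (outcome μ0 δ (phaseStrat P f) n) :=
    (phaseMass_le_outcome hμ0.1 hδ.nonneg (pureOf_nonneg _) htgt n).trans (le_dnorm _ _)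
  have hG := tendsto_one_of_contraction (K := Finset.univ.sup R + 1) (Nat.succ_pos _)
    (pow_pos hη0 _) (pow_le_one₀ hη0.le hη1)
    (fun n => Finset.sum_nonneg fun h _ => pr_nonneg hμ0.1 hδ.nonneg (pureOf_nonneg _) h)
    (fun n => (hGX n).trans (hX n).dnorm_le_one)
    (one_sub_phaseMass_add_le hinit hU hD hR hμ0 hδ hη0.le (fun l a l' => hη (l, a, l'))
      fun w => (Finset.le_sup (Finset.mem_univ w)).trans (Nat.le_succ _))
  exact (tendsto_of_tendsto_of_tendsto_of_le_of_le hG tendsto_const_nhds hGX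
    fun n => (hX n).dnorm_le_one).liminf_eq

end Absorption

section Assembly

variable {μ0 : L → ℝ} {δ : L → A → L → ℝ} {α : Hist L A → A → ℝ}

/-- Play the cycle on its graph `D`, and elsewhere the ranked action extracted from `α`. -/
lemma exists_stronglySync_phaseStrat_of_cycle (hμ0 : IsDist μ0) (hδ : IsTrans δ)
    (hα : IsStrategy α) {P : ℕ} [NeZero P] {s : ZMod P → L} {b : ZMod P → A}
    (hb : ∀ k, δ (s k) (b k) (s (k + 1)) = 1)
    (hreach : ∀ h, 0 < pr μ0 δ α h →
      ∃ h', h'.take h.len = h ∧ 0 < pr μ0 δ α h' ∧ statePhase P h' ∈ {w | w.1 = s w.2}) :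
    ∃ f : L × ZMod P → A, StronglySync μ0 δ (phaseStrat P f) := by
  classical
  have : Nonempty A := ⟨b 0⟩
  set D := {w : L × ZMod P | w.1 = s w.2}
  obtain ⟨f, R, hf⟩ := exists_ranked_action hμ0.1 hδ.nonneg hα.nonneg P D hreach
  have hDstep : ∀ w ∈ D, ∀ l, 0 < δ w.1 (b w.2) l → (l, w.2 + 1) ∈ D := by
    rintro ⟨l₀, k⟩ (rfl : l₀ = s k) l hl
    by_contra hne
    exact hl.ne' ((hδ _ _).eq_zero_of_eq_one (hb k) hne)
  refine ⟨fun w => if w ∈ D then b w.2 else f w, stronglySync_phaseStrat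
    (U := statePhase P '' {h | 0 < pr μ0 δ α h} ∪ D) (R := R)
    (fun l hl => Or.inl
      ⟨⟨l, []⟩, by simpa using hl, by simp [statePhase, Hist.last, Hist.len]⟩)
    ?_ (fun w hw l hl => hDstep w hw l (by simpa [hw] using hl)) ?_ hμ0 hδ (tgt := s)
    fun w hw => hw⟩
  · rintro w (hw | hw) l hl
    · by_cases hwD : w ∈ D
      · exact Or.inr (hDstep w hwD l (by simpa [hwD] using hl))
      · exact Or.inl ((hf w hw hwD).1 l (by simpa [hwD] using hl))
    · exact Or.inr (hDstep w hw l (by simpa [hw] using hl))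
  · rintro w (hw | hw) hwD
    · simpa [hwD] using (hf w hw hwD).2
    · exact absurd hw hwD

end Assembly

/-- If an MDP has a strongly synchronizing (randomized) strategy,
then it has a strongly synchronizing pure strategy. -/
theorem pure_sufficient_strongly
    (μ0 : L → ℝ) (δ : L → A → L → ℝ)
    (hμ0 : IsDist μ0) (hδ : IsTrans δ)
    (h : ∃ α : Hist L A → A → ℝ, IsStrategy α ∧ StronglySync μ0 δ α) :
    ∃ β : Hist L A → A → ℝ, IsStrategy β ∧ PureStrat β ∧ StronglySync μ0 δ β := by
  obtain ⟨α, hα, hsync⟩ := h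
  obtain ⟨ls, hls⟩ := hsync.exists_tendsto hμ0 hδ hα
  obtain ⟨P, _, s, hs, hfreq⟩ :=
    exists_cycle_frequently (E := fun l l' => ∃ a, δ l a l' = 1)
      (eventually_exists_dirac_step hμ0 hδ hα hls)
  choose b hb using hs
  obtain ⟨f, hf⟩ := exists_stronglySync_phaseStrat_of_cycle hμ0 hδ hα hb
    fun h hh => exists_extension_phase_mem hμ0 hδ hα hls hfreq hh
  exact ⟨_, isStrategy_pureOf _, pureStrat_pureOf _, hf⟩

end SyncMDP
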